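/- arXiv:2106.00092 — 2 statements merged into one kernel-verified Lean document; each statement's English description precedes it below -/
import Mathlib

section
/- Let 0 < λ₂ < λ₁ < 1, let f : ℝ^d → ℝ be continuously differentiable and bounded below by 0, set α(t) = (1-(1-λ₁)^t)/√(1-(1-λ₂)^t), and let (μ, v, x) : [1,∞) → ℝ^d × ℝ^d × ℝ^d solve μ̇ᵢ = -λ₁ μᵢ + λ₁ ∇ᵢf(x), v̇ᵢ = -λ₂ vᵢ + λ₂ (∇ᵢf(x))², ẋᵢ = -(1/α(t)) μᵢ/√(vᵢ) with μ(1) = 0 and vᵢ(1) > 0 for all i. Let T ≥ 1 be such that α'(t) < 0 for all t ≥ T. Then the function t ↦ α(t) f(x(t)) + Σᵢ μᵢ(t)²/(2λ₁√(vᵢ(t))) is nonincreasing on [T,∞). -/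
/-!
Since `ẋ = -(1/α) μ/√v`, the chain rule gives
`d/dt (α f(x)) = α' f(x) - Σᵢ ∇ᵢf(x) μᵢ/√vᵢ`: the preconditioner `1/α` cancels the weight `α`.
The momentum energy `μᵢ²/(2λ₁√vᵢ)` has derivative `∇ᵢf(x) μᵢ/√vᵢ - Dᵢ` with the dissipation
`Dᵢ = (1 - λ₂/(4λ₁)) μᵢ²/√vᵢ + λ₂ (μᵢ ∇ᵢf(x))²/(4λ₁ √vᵢ³) ≥ 0`,
so the cross terms cancel and the Lyapunov function has derivative `α' f(x) - Σᵢ Dᵢ ≤ 0`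
wherever `α' < 0`. The square roots are differentiable because `v̇ᵢ ≥ -λ₂ vᵢ` makes
`vᵢ(t) e^{λ₂ t}` nondecreasing, so `vᵢ` stays positive.
-/

open Real

theorem pos_of_hasDerivAt_of_neg_mul_le {v v' : ℝ → ℝ} {a c : ℝ}
    (hv : ∀ t ≥ a, HasDerivAt v (v' t) t) (hv' : ∀ t ≥ a, -c * v t ≤ v' t) (ha : 0 < v a)
    {t : ℝ} (ht : a ≤ t) : 0 < v t := by
  have hw : ∀ s ≥ a, HasDerivAt (fun s => v s * exp (c * s))
      ((v' s + c * v s) * exp (c * s)) s := fun s hs =>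
    ((hv s hs).mul ((hasDerivAt_id' s).const_mul c).exp).congr_deriv (by ring)
  have hmono : MonotoneOn (fun s => v s * exp (c * s)) (Set.Ici a) := by
    refine monotoneOn_of_hasDerivWithinAt_nonneg
      (f' := fun s => (v' s + c * v s) * exp (c * s)) (convex_Ici a)
      (fun s hs => (hw s hs).continuousAt.continuousWithinAt) (fun s hs => ?_) (fun s hs => ?_)
    all_goals rw [interior_Ici] at hs
    · exact (hw s hs.le).hasDerivWithinAt
    · exact mul_nonneg (by linarith [hv' s hs.le]) (exp_pos _).le
  have hle : v a * exp (c * a) ≤ v t * exp (c * t) := hmono (Set.mem_Ici.2 le_rfl) ht ht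
  exact pos_of_mul_pos_left ((mul_pos ha (exp_pos _)).trans_le hle) (exp_pos _).le

theorem one_sub_rpow_pos {l t : ℝ} (hl : 0 < l) (hl₁ : l ≤ 1) (ht : 0 < t) :
    0 < 1 - (1 - l) ^ t :=
  sub_pos.2 (rpow_lt_one (by linarith) (by linarith) ht)

theorem hasDerivAt_piLp_of_apply {𝕜 ι : Type*} [NontriviallyNormedField 𝕜] [Fintype ι]
    {E : ι → Type*} [∀ i, NormedAddCommGroup (E i)] [∀ i, NormedSpace 𝕜 (E i)]
    {p : ENNReal} [Fact (1 ≤ p)] {φ : 𝕜 → PiLp p E} {φ' : PiLp p E} {t : 𝕜}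
    (h : ∀ i, HasDerivAt (fun s => φ s i) (φ' i) t) : HasDerivAt φ φ' t := by
  have := (PiLp.hasFDerivAt_toLp p (𝕜 := 𝕜) (φ t).ofLp).comp_hasDerivAt t
    (hasDerivAt_pi.2 h)
  simpa [Function.comp_def] using this

theorem DifferentiableAt.hasDerivAt_comp_euclidean {ι : Type*} [Fintype ι]
    {f : EuclideanSpace ℝ ι → ℝ} {x : ℝ → EuclideanSpace ℝ ι} {x' : ι → ℝ} {t : ℝ}
    (hf : DifferentiableAt ℝ f (x t)) (hx : ∀ i, HasDerivAt (fun s => x s i) (x' i) t) :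
    HasDerivAt (fun s => f (x s)) (∑ i, gradient f (x t) i * x' i) t := by
  have := hf.hasGradientAt.hasFDerivAt.comp_hasDerivAt t
    (hasDerivAt_piLp_of_apply (φ' := WithLp.toLp 2 x') hx)
  simpa only [InnerProductSpace.toDual_apply_apply, PiLp.inner_apply, RCLike.inner_apply,
    conj_trivial, mul_comm, Function.comp_def] using this

theorem DifferentiableAt.hasDerivAt_mul_comp_of_preconditioned {ι : Type*} [Fintype ι]
    {f : EuclideanSpace ℝ ι → ℝ} {x : ℝ → EuclideanSpace ℝ ι} {α : ℝ → ℝ} {α' t : ℝ}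
    {u : ι → ℝ} (hf : DifferentiableAt ℝ f (x t)) (hα : HasDerivAt α α' t)
    (hαt : α t ≠ 0) (hx : ∀ i, HasDerivAt (fun s => x s i) (-(1 / α t) * u i) t) :
    HasDerivAt (fun s => α s * f (x s))
      (α' * f (x t) - ∑ i, gradient f (x t) i * u i) t := by
  refine (hα.mul (hf.hasDerivAt_comp_euclidean hx)).congr_deriv ?_
  rw [Finset.mul_sum, sub_eq_add_neg, ← Finset.sum_neg_distrib]
  congr 1
  refine Finset.sum_congr rfl fun i _ => ?_
  field_simp

/-- The dissipation `Dᵢ`, with `s` standing for `√vᵢ`. -/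
noncomputable def adamDissipation (lam₁ lam₂ m g s : ℝ) : ℝ :=
  (1 - lam₂ / (4 * lam₁)) * m ^ 2 / s + lam₂ * (m * g) ^ 2 / (4 * lam₁ * s ^ 3)

theorem adamDissipation_nonneg {lam₁ lam₂ m g s : ℝ} (hlam₂ : 0 ≤ lam₂)
    (hlam₁₂ : lam₂ ≤ 4 * lam₁) (hs : 0 ≤ s) : 0 ≤ adamDissipation lam₁ lam₂ m g s := by
  have hlam₁ : 0 ≤ lam₁ := by linarith
  have hcoef : 0 ≤ 1 - lam₂ / (4 * lam₁) :=
    sub_nonneg.2 (div_le_one_of_le₀ hlam₁₂ (by positivity))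
  unfold adamDissipation
  positivity

theorem hasDerivAt_sq_div_sqrt_of_adam {m v : ℝ → ℝ} {lam₁ lam₂ g t : ℝ}
    (hlam₁ : lam₁ ≠ 0) (hm : HasDerivAt m (-lam₁ * m t + lam₁ * g) t)
    (hv : HasDerivAt v (-lam₂ * v t + lam₂ * g ^ 2) t) (hvt : 0 < v t) :
    HasDerivAt (fun s => m s ^ 2 / (2 * lam₁ * √(v s)))
      (g * (m t / √(v t)) - adamDissipation lam₁ lam₂ (m t) g √(v t)) t := by
  have hs : 0 < √(v t) := sqrt_pos.2 hvt
  refine ((hm.fun_pow 2).div ((hv.sqrt hvt.ne').const_mul (2 * lam₁))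
    (by positivity)).congr_deriv ?_
  set s := √(v t)
  rw [show v t = s ^ 2 from (sq_sqrt hvt.le).symm]
  unfold adamDissipation
  field_simp
  ring

theorem adam_lyapunov_antitone_general
    (d : ℕ) (lam₁ lam₂ : ℝ)
    (hlam₂ : 0 < lam₂) (hlam₁₂ : lam₂ < lam₁) (hlam₁ : lam₁ < 1)
    (f : EuclideanSpace ℝ (Fin d) → ℝ)
    (hf : ContDiff ℝ 1 f) (hf0 : ∀ y, 0 ≤ f y)
    (α : ℝ → ℝ)
    (hα : ∀ t : ℝ, α t = (1 - (1 - lam₁) ^ t) / Real.sqrt (1 - (1 - lam₂) ^ t))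
    (μ v x : ℝ → EuclideanSpace ℝ (Fin d))
    (hμ : ∀ t ≥ (1 : ℝ), ∀ i : Fin d, HasDerivAt (fun s => μ s i)
      (-lam₁ * μ t i + lam₁ * gradient f (x t) i) t)
    (hv : ∀ t ≥ (1 : ℝ), ∀ i : Fin d, HasDerivAt (fun s => v s i)
      (-lam₂ * v t i + lam₂ * (gradient f (x t) i) ^ 2) t)
    (hx : ∀ t ≥ (1 : ℝ), ∀ i : Fin d, HasDerivAt (fun s => x s i)
      (-(1 / α t) * (μ t i / Real.sqrt (v t i))) t)
    (hv1 : ∀ i : Fin d, 0 < v 1 i)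
    (T : ℝ) (hT : 1 ≤ T) (hαdec : ∀ t ≥ T, deriv α t < 0) :
    AntitoneOn
      (fun t => α t * f (x t) + ∑ i : Fin d, μ t i ^ 2 / (2 * lam₁ * Real.sqrt (v t i)))
      (Set.Ici T) := by
  have hvpos : ∀ t ≥ (1 : ℝ), ∀ i, 0 < v t i := fun t ht i =>
    pos_of_hasDerivAt_of_neg_mul_le (c := lam₂) (fun s hs => hv s hs i)
      (fun s _ => le_add_of_nonneg_right (by positivity)) (hv1 i) ht
  have hαne : ∀ t ≥ (1 : ℝ), α t ≠ 0 := fun t ht => by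
    rw [hα t]
    exact (div_pos (one_sub_rpow_pos (by linarith) hlam₁.le (by linarith))
      (sqrt_pos.2 (one_sub_rpow_pos hlam₂ (by linarith) (by linarith)))).ne'
  have hderiv : ∀ t ≥ T, HasDerivAt
      (fun t => α t * f (x t) + ∑ i : Fin d, μ t i ^ 2 / (2 * lam₁ * Real.sqrt (v t i)))
      (deriv α t * f (x t) -
        ∑ i, adamDissipation lam₁ lam₂ (μ t i) (gradient f (x t) i) √(v t i)) t :=
      fun t ht => by
    have ht1 : 1 ≤ t := hT.trans ht
    have hαt := (differentiableAt_of_deriv_ne_zero (hαdec t ht).ne).hasDerivAt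
    have hobjective := DifferentiableAt.hasDerivAt_mul_comp_of_preconditioned
      (hf.differentiable one_ne_zero (x t)) hαt (hαne t ht1) (hx t ht1)
    have henergy := HasDerivAt.fun_sum fun i (_ : i ∈ Finset.univ) =>
      hasDerivAt_sq_div_sqrt_of_adam (by linarith) (hμ t ht1 i) (hv t ht1 i) (hvpos t ht1 i)
    refine (hobjective.add henergy).congr_deriv ?_
    rw [Finset.sum_sub_distrib]
    ring
  refine antitoneOn_of_hasDerivWithinAt_nonpos (convex_Ici T)
    (fun t ht => (hderiv t ht).continuousAt.continuousWithinAt)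
    (fun t ht => (hderiv t (interior_subset ht)).hasDerivWithinAt) (fun t ht => ?_)
  have ht : T ≤ t := interior_subset ht
  exact sub_nonpos.2 ((mul_nonpos_of_nonpos_of_nonneg (hαdec t ht).le (hf0 _)).trans
    (Finset.sum_nonneg fun _ _ =>
      adamDissipation_nonneg hlam₂.le (by linarith) (sqrt_nonneg _)))

/-- Lyapunov monotonicity for continuous-time Adam: once the bias-correction
factor `α` is strictly decreasing (`α'(t) < 0` for `t ≥ T`), the function
`t ↦ α(t) f(x(t)) + Σᵢ μᵢ(t)²/(2λ₁√(vᵢ(t)))` is nonincreasing on `[T,∞)`. -/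
theorem adam_lyapunov_antitone
    (d : ℕ) (lam₁ lam₂ : ℝ)
    (hlam₂ : 0 < lam₂) (hlam₁₂ : lam₂ < lam₁) (hlam₁ : lam₁ < 1)
    (f : EuclideanSpace ℝ (Fin d) → ℝ)
    (hf : ContDiff ℝ 1 f) (hf0 : ∀ y, 0 ≤ f y)
    (α : ℝ → ℝ)
    (hα : ∀ t : ℝ, α t = (1 - (1 - lam₁) ^ t) / Real.sqrt (1 - (1 - lam₂) ^ t))
    (μ v x : ℝ → EuclideanSpace ℝ (Fin d))
    (hμ : ∀ t ≥ (1 : ℝ), ∀ i : Fin d, HasDerivAt (fun s => μ s i)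
      (-lam₁ * μ t i + lam₁ * gradient f (x t) i) t)
    (hv : ∀ t ≥ (1 : ℝ), ∀ i : Fin d, HasDerivAt (fun s => v s i)
      (-lam₂ * v t i + lam₂ * (gradient f (x t) i) ^ 2) t)
    (hx : ∀ t ≥ (1 : ℝ), ∀ i : Fin d, HasDerivAt (fun s => x s i)
      (-(1 / α t) * (μ t i / Real.sqrt (v t i))) t)
    (hμ1 : μ 1 = 0) (hv1 : ∀ i : Fin d, 0 < v 1 i)
    (T : ℝ) (hT : 1 ≤ T) (hαdec : ∀ t ≥ T, deriv α t < 0) :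
    AntitoneOn
      (fun t => α t * f (x t) + ∑ i : Fin d, μ t i ^ 2 / (2 * lam₁ * Real.sqrt (v t i)))
      (Set.Ici T) :=
  adam_lyapunov_antitone_general d lam₁ lam₂ hlam₂ hlam₁₂ hlam₁ f hf hf0 α hα μ v x hμ hv hx hv1 T
    hT hαdec
end

section
/- Let 0 < λ₂ < λ₁ < 1, let f : ℝ^d → ℝ be continuously differentiable and bounded below by 0 with Lipschitz continuous gradient, set α(t) = (1-(1-λ₁)^t)/√(1-(1-λ₂)^t), and let (μ, v, x) : [1,∞) → ℝ^d × ℝ^d × ℝ^d solve μ̇ᵢ = -λ₁ μᵢ + λ₁ ∇ᵢf(x), v̇ᵢ = -λ₂ vᵢ + λ₂ (∇ᵢf(x))², ẋᵢ = -(1/α(t)) μᵢ/√(vᵢ) with μ(1) = 0 and vᵢ(1) > 0 for all i. Then t ↦ ‖∇f(x(t))‖, t ↦ μ(t), t ↦ v(t), and t ↦ ẋ(t) are all bounded on [1,∞). -/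
/-!
The defect `lam₁ vᵢ - lam₂ μᵢ²` satisfies `w' + lam₂ w ≥ 0` along the flow, so it stays positive:
`v` stays positive and `|μᵢ / √vᵢ| ≤ √(lam₁ / lam₂)`, which together with `1 / α ≤ 1 / lam₁`
bounds the velocity. Since the logarithmic derivative of `1 / α` is at most `2 lam₁ - lam₂ / 2`,
`f(x) + Σᵢ μᵢ² / (2 lam₁ α √vᵢ)` is a Lyapunov function, so `f(x(t)) ≤ f(x(1))`; the descent lemma
for `f ≥ 0` then gives `‖∇f(x)‖² ≤ 2 L f(x)`. Finally `μ` and `v` are exponential moving averages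
of bounded signals, hence bounded.
-/

open Real Set
open scoped InnerProductSpace

section Comparison

variable {a c : ℝ} {w w' : ℝ → ℝ}

theorem monotoneOn_Ici_of_hasDerivAt_nonneg (hw : ∀ s ≥ a, HasDerivAt w (w' s) s)
    (h : ∀ s ≥ a, 0 ≤ w' s) : MonotoneOn w (Ici a) :=
  monotoneOn_of_hasDerivWithinAt_nonneg (convex_Ici a)
    (fun s hs => (hw s hs).continuousAt.continuousWithinAt)
    (fun s hs => by rw [interior_Ici] at hs; exact (hw s hs.le).hasDerivWithinAt)
    (fun s hs => by rw [interior_Ici] at hs; exact h s hs.le)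

theorem antitoneOn_Ici_of_hasDerivAt_nonpos (hw : ∀ s ≥ a, HasDerivAt w (w' s) s)
    (h : ∀ s ≥ a, w' s ≤ 0) : AntitoneOn w (Ici a) :=
  antitoneOn_of_hasDerivWithinAt_nonpos (convex_Ici a)
    (fun s hs => (hw s hs).continuousAt.continuousWithinAt)
    (fun s hs => by rw [interior_Ici] at hs; exact (hw s hs.le).hasDerivWithinAt)
    (fun s hs => by rw [interior_Ici] at hs; exact h s hs.le)

/-- The integrating factor `e^{c s}` turns `w' + c w ≥ 0` into monotonicity. -/
theorem exp_mul_mul_le_of_hasDerivAt (hw : ∀ s ≥ a, HasDerivAt w (w' s) s)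
    (h : ∀ s ≥ a, 0 ≤ w' s + c * w s) {t : ℝ} (ht : a ≤ t) :
    exp (c * a) * w a ≤ exp (c * t) * w t := by
  refine monotoneOn_Ici_of_hasDerivAt_nonneg (w := fun s => exp (c * s) * w s)
    (w' := fun s => exp (c * s) * (w' s + c * w s))
    (fun s hs => ?_) (fun s hs => mul_nonneg (exp_pos _).le (h s hs)) (mem_Ici.2 le_rfl) ht ht
  refine (((hasDerivAt_id s).const_mul c).exp.mul (hw s hs)).congr_deriv ?_
  simp only [id, mul_one]
  ring

theorem pos_of_hasDerivAt_add_mul_nonneg (hw : ∀ s ≥ a, HasDerivAt w (w' s) s)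
    (h : ∀ s ≥ a, 0 ≤ w' s + c * w s) (ha : 0 < w a) : ∀ t ≥ a, 0 < w t := fun _ ht =>
  pos_of_mul_pos_right ((mul_pos (exp_pos _) ha).trans_le (exp_mul_mul_le_of_hasDerivAt hw h ht))
    (exp_pos _).le

theorem nonneg_of_hasDerivAt_add_mul_nonneg (hw : ∀ s ≥ a, HasDerivAt w (w' s) s)
    (h : ∀ s ≥ a, 0 ≤ w' s + c * w s) (ha : 0 ≤ w a) : ∀ t ≥ a, 0 ≤ w t := fun _ ht =>
  nonneg_of_mul_nonneg_right
    ((mul_nonneg (exp_pos _).le ha).trans (exp_mul_mul_le_of_hasDerivAt hw h ht)) (exp_pos _)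

end Comparison

section MovingAverage

variable {a lam : ℝ} {m g : ℝ → ℝ}

theorem abs_le_of_hasDerivAt_movingAverage {G : ℝ} (hlam : 0 ≤ lam)
    (hm : ∀ s ≥ a, HasDerivAt m (-lam * m s + lam * g s) s) (hg : ∀ s ≥ a, |g s| ≤ G)
    (ha : |m a| ≤ G) : ∀ t ≥ a, |m t| ≤ G := by
  have upper := nonneg_of_hasDerivAt_add_mul_nonneg (w := fun s => G - m s) (c := lam)
    (fun s hs => (hm s hs).const_sub G)
    (fun s hs => by nlinarith [(abs_le.1 (hg s hs)).2]) (by linarith [(abs_le.1 ha).2])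
  have lower := nonneg_of_hasDerivAt_add_mul_nonneg (w := fun s => G + m s) (c := lam)
    (fun s hs => (hm s hs).const_add G)
    (fun s hs => by nlinarith [(abs_le.1 (hg s hs)).1]) (by linarith [(abs_le.1 ha).1])
  exact fun t ht => abs_le.2 ⟨by linarith [lower t ht], by linarith [upper t ht]⟩

/-- `w = lam₁ u - lam₂ m²` satisfies `w' + lam₂ w = lam₂ (lam₁ (g - m)² + (lam₁ - lam₂) m²)`. -/
theorem mul_sq_lt_of_hasDerivAt_movingAverage {lam₁ lam₂ : ℝ} {u : ℝ → ℝ} (h₂ : 0 < lam₂)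
    (h₁₂ : lam₂ ≤ lam₁) (hm : ∀ s ≥ a, HasDerivAt m (-lam₁ * m s + lam₁ * g s) s)
    (hu : ∀ s ≥ a, HasDerivAt u (-lam₂ * u s + lam₂ * g s ^ 2) s)
    (ha : lam₂ * m a ^ 2 < lam₁ * u a) : ∀ t ≥ a, lam₂ * m t ^ 2 < lam₁ * u t := by
  have := pos_of_hasDerivAt_add_mul_nonneg (w := fun s => lam₁ * u s - lam₂ * m s ^ 2) (c := lam₂)
    (fun s hs => ((hu s hs).const_mul lam₁).sub (((hm s hs).pow 2).const_mul lam₂))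
    (fun s hs => by
      rw [show (2 - 1 : ℕ) = 1 from rfl, pow_one, Nat.cast_ofNat]
      nlinarith [mul_nonneg h₂.le (mul_nonneg (h₂.le.trans h₁₂) (sq_nonneg (g s - m s))),
        mul_nonneg h₂.le (mul_nonneg (sub_nonneg.2 h₁₂) (sq_nonneg (m s)))])
    (sub_pos.2 ha)
  exact fun t ht => sub_pos.1 (this t ht)

end MovingAverage

section BiasCorrection

noncomputable def adamAlpha (lam₁ lam₂ t : ℝ) : ℝ := (1 - (1 - lam₁) ^ t) / √(1 - (1 - lam₂) ^ t)

/-- The logarithmic derivative of `t ↦ 1 - (1 - lam) ^ t`. -/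
noncomputable def biasLogDeriv (lam t : ℝ) : ℝ :=
  (1 - lam) ^ t * -log (1 - lam) / (1 - (1 - lam) ^ t)

variable {lam lam₁ lam₂ t : ℝ}

theorem le_one_sub_one_sub_rpow (h0 : 0 < lam) (h1 : lam < 1) (ht : 1 ≤ t) :
    lam ≤ 1 - (1 - lam) ^ t := by
  have := rpow_le_rpow_of_exponent_ge (sub_pos.2 h1) (by linarith) ht
  rw [rpow_one] at this
  linarith

theorem one_div_adamAlpha :
    1 / adamAlpha lam₁ lam₂ t = √(1 - (1 - lam₂) ^ t) / (1 - (1 - lam₁) ^ t) :=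
  one_div_div _ _

theorem one_div_adamAlpha_pos (h₁ : 0 < lam₁) (h₁' : lam₁ < 1) (h₂ : 0 < lam₂) (h₂' : lam₂ < 1)
    (ht : 1 ≤ t) : 0 < 1 / adamAlpha lam₁ lam₂ t := by
  rw [one_div_adamAlpha]
  exact div_pos (sqrt_pos.2 (h₂.trans_le (le_one_sub_one_sub_rpow h₂ h₂' ht)))
    (h₁.trans_le (le_one_sub_one_sub_rpow h₁ h₁' ht))

theorem one_div_adamAlpha_le (h₁ : 0 < lam₁) (h₁' : lam₁ < 1) (h₂ : lam₂ < 1) (ht : 1 ≤ t) :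
    1 / adamAlpha lam₁ lam₂ t ≤ 1 / lam₁ := by
  rw [one_div_adamAlpha]
  refine div_le_div₀ zero_le_one (sqrt_le_one.2 ?_) h₁ (le_one_sub_one_sub_rpow h₁ h₁' ht)
  linarith [rpow_nonneg (sub_pos.2 h₂).le t]

theorem hasDerivAt_one_sub_rpow (h : lam < 1) (t : ℝ) :
    HasDerivAt (fun s => 1 - (1 - lam) ^ s) ((1 - lam) ^ t * -log (1 - lam)) t := by
  simpa [mul_neg] using ((hasStrictDerivAt_const_rpow (sub_pos.2 h) t).hasDerivAt).const_sub 1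

theorem hasDerivAt_one_div_adamAlpha (h₁ : 0 < lam₁) (h₁' : lam₁ < 1) (h₂ : 0 < lam₂)
    (h₂' : lam₂ < 1) (ht : 1 ≤ t) :
    HasDerivAt (fun s => 1 / adamAlpha lam₁ lam₂ s)
      (1 / adamAlpha lam₁ lam₂ t * (biasLogDeriv lam₂ t / 2 - biasLogDeriv lam₁ t)) t := by
  have hN := h₁.trans_le (le_one_sub_one_sub_rpow h₁ h₁' ht)
  have hB := h₂.trans_le (le_one_sub_one_sub_rpow h₂ h₂' ht)
  simp only [one_div_adamAlpha]
  refine (((hasDerivAt_one_sub_rpow h₂' t).sqrt hB.ne').div (hasDerivAt_one_sub_rpow h₁' t)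
    hN.ne').congr_deriv ?_
  have hsq := sq_sqrt hB.le
  rw [biasLogDeriv, biasLogDeriv]
  field_simp
  rw [hsq]

/-- `y e^{-y} ≤ 1 - e^{-y}` for `y = -t log (1 - lam)`. -/
theorem biasLogDeriv_le (h0 : 0 < lam) (h1 : lam < 1) (ht : 0 < t) :
    biasLogDeriv lam t ≤ 1 / t := by
  have hb : (1 - lam) ^ t = exp (-(t * -log (1 - lam))) := by
    rw [rpow_def_of_pos (sub_pos.2 h1)]; ring_nf
  have hpos : 0 < 1 - (1 - lam) ^ t := by
    linarith [rpow_lt_one (sub_pos.2 h1).le (by linarith : 1 - lam < 1) ht]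
  have key : exp (-(t * -log (1 - lam))) * (t * -log (1 - lam) + 1) ≤ 1 := by
    calc _ ≤ exp (-(t * -log (1 - lam))) * exp (t * -log (1 - lam)) :=
          mul_le_mul_of_nonneg_left (add_one_le_exp _) (exp_pos _).le
      _ = 1 := by rw [← exp_add, neg_add_cancel, exp_zero]
  rw [biasLogDeriv, div_le_div_iff₀ hpos ht, hb]
  linarith

/-- `e^z ≤ 1 + 2 z` for `z = -t log (1 - lam) ≤ 1/2`. -/
theorem inv_two_mul_le_biasLogDeriv (h0 : 0 < lam) (h1 : lam < 1) (ht : 0 < t)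
    (hz : t * -log (1 - lam) ≤ 1 / 2) : 1 / (2 * t) ≤ biasLogDeriv lam t := by
  set z := t * -log (1 - lam) with hz_def
  have hz0 : 0 < z := mul_pos ht (neg_pos.2 (log_neg (by linarith) (by linarith)))
  have hb : (1 - lam) ^ t = exp (-z) := by
    rw [rpow_def_of_pos (sub_pos.2 h1), hz_def]; ring_nf
  have hpos : 0 < 1 - (1 - lam) ^ t := by
    linarith [rpow_lt_one (sub_pos.2 h1).le (by linarith : 1 - lam < 1) ht]
  have hexp : exp z ≤ 1 + 2 * z := by
    have := exp_bound_div_one_sub_of_interval' hz0 (by linarith)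
    rw [lt_div_iff₀ (by linarith)] at this
    nlinarith
  have key : 1 - exp (-z) ≤ 2 * z * exp (-z) := by
    have h := mul_le_mul_of_nonneg_left hexp (exp_pos (-z)).le
    rw [← exp_add, neg_add_cancel, exp_zero] at h
    linarith
  rw [biasLogDeriv, div_le_div_iff₀ (by positivity) hpos, hb]
  nlinarith

theorem biasLogDeriv_nonneg (h0 : 0 < lam) (h1 : lam < 1) (ht : 0 < t) :
    0 ≤ biasLogDeriv lam t := by
  have hpos : 0 < 1 - (1 - lam) ^ t := by
    linarith [rpow_lt_one (sub_pos.2 h1).le (by linarith : 1 - lam < 1) ht]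
  have := log_nonpos (sub_pos.2 h1).le (by linarith : 1 - lam ≤ 1)
  exact div_nonneg (mul_nonneg (rpow_nonneg (sub_pos.2 h1).le t) (by linarith)) hpos.le

/-- For large `t lam₁` the first term is at most `1 / (2t)`; for small `t lam₁`, the second
term dominates the first. -/
theorem biasLogDeriv_sub_le (h₂ : 0 < lam₂) (h₁₂ : lam₂ ≤ lam₁) (h₁ : lam₁ < 1) (ht : 1 ≤ t) :
    biasLogDeriv lam₂ t / 2 - biasLogDeriv lam₁ t ≤ 2 * lam₁ - lam₂ / 2 := by
  have ht0 : 0 < t := by linarith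
  have hle₂ := biasLogDeriv_le h₂ (by linarith) ht0
  rcases le_or_gt (1 / 3) (t * lam₁) with hlarge | hsmall
  · have hnn := biasLogDeriv_nonneg (h₂.trans_le h₁₂) h₁ ht0
    have : 1 / t ≤ 3 * lam₁ := by rw [div_le_iff₀ ht0]; linarith
    linarith
  · have hlog : -log (1 - lam₁) ≤ lam₁ / (1 - lam₁) := by
      have := one_sub_inv_le_log_of_pos (sub_pos.2 h₁)
      have hne : 1 - lam₁ ≠ 0 := by linarith
      have e : lam₁ / (1 - lam₁) = (1 - lam₁)⁻¹ - 1 := by field_simp; ring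
      linarith
    have hlam₁ : lam₁ < 1 / 3 := by nlinarith
    have hz : t * -log (1 - lam₁) ≤ 1 / 2 := by
      have : lam₁ / (1 - lam₁) ≤ 3 / 2 * lam₁ := by
        rw [div_le_iff₀ (by linarith)]; nlinarith
      nlinarith
    have := inv_two_mul_le_biasLogDeriv (h₂.trans_le h₁₂) h₁ ht0 hz
    have e : 1 / (2 * t) = 1 / t / 2 := by ring
    linarith

end BiasCorrection

section Gradient

variable {F : Type*} [NormedAddCommGroup F] [InnerProductSpace ℝ F] [CompleteSpace F] {f : F → ℝ}

theorem DifferentiableAt.hasDerivAt_comp {c : ℝ → F} {c' : F} {t : ℝ}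
    (hf : DifferentiableAt ℝ f (c t)) (hc : HasDerivAt c c' t) :
    HasDerivAt (fun s => f (c s)) ⟪gradient f (c t), c'⟫_ℝ t := by
  rw [inner_gradient_left]
  exact hf.hasFDerivAt.comp_hasDerivAt t hc

/-- The descent lemma: `s ↦ f (p + s • w) - s ⟪∇f p, w⟫ - L s² ‖w‖² / 2` is antitone for `s ≥ 0`. -/
theorem apply_add_le_of_lipschitzWith_gradient (hf : Differentiable ℝ f) {L : NNReal}
    (hlip : LipschitzWith L (gradient f)) (p w : F) :
    f (p + w) ≤ f p + ⟪gradient f p, w⟫_ℝ + L / 2 * ‖w‖ ^ 2 := by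
  have hderiv : ∀ s ≥ (0 : ℝ), HasDerivAt
      (fun s => f (p + s • w) - s * ⟪gradient f p, w⟫_ℝ - L / 2 * ‖w‖ ^ 2 * s ^ 2)
      (⟪gradient f (p + s • w), w⟫_ℝ - ⟪gradient f p, w⟫_ℝ - L * ‖w‖ ^ 2 * s) s := by
    intro s _
    have hc : HasDerivAt (fun s : ℝ => p + s • w) w s := by
      simpa using ((hasDerivAt_id s).smul_const w).const_add p
    refine (((hf _).hasDerivAt_comp hc).sub ((hasDerivAt_id s).mul_const _)).sub
      (((hasDerivAt_id s).pow 2).const_mul _) |>.congr_deriv ?_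
    simp only [id, Nat.cast_ofNat]
    ring
  have hnonpos : ∀ s ≥ (0 : ℝ),
      ⟪gradient f (p + s • w), w⟫_ℝ - ⟪gradient f p, w⟫_ℝ - L * ‖w‖ ^ 2 * s ≤ 0 := by
    intro s hs
    have hdist : ‖gradient f (p + s • w) - gradient f p‖ ≤ L * (s * ‖w‖) := by
      simpa [norm_smul, abs_of_nonneg hs] using lipschitzWith_iff_norm_sub_le.1 hlip (p + s • w) p
    calc ⟪gradient f (p + s • w), w⟫_ℝ - ⟪gradient f p, w⟫_ℝ - L * ‖w‖ ^ 2 * s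
        = ⟪gradient f (p + s • w) - gradient f p, w⟫_ℝ - L * ‖w‖ ^ 2 * s := by
          rw [inner_sub_left]
      _ ≤ ‖gradient f (p + s • w) - gradient f p‖ * ‖w‖ - L * ‖w‖ ^ 2 * s := by
          gcongr; exact real_inner_le_norm _ _
      _ ≤ L * (s * ‖w‖) * ‖w‖ - L * ‖w‖ ^ 2 * s := by gcongr
      _ = 0 := by ring
  have := antitoneOn_Ici_of_hasDerivAt_nonpos hderiv hnonpos (mem_Ici.2 le_rfl)
    (mem_Ici.2 zero_le_one) zero_le_one
  simp only [one_smul, zero_smul, add_zero, one_mul, zero_mul, one_pow, mul_one, sub_zero,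
    zero_pow two_ne_zero, mul_zero] at this
  linarith

theorem sq_norm_gradient_le_of_lipschitzWith (hf : Differentiable ℝ f) (hf0 : ∀ y, 0 ≤ f y)
    {L : NNReal} (hL : 0 < L) (hlip : LipschitzWith L (gradient f)) (p : F) :
    ‖gradient f p‖ ^ 2 ≤ 2 * L * f p := by
  have hL' : (0 : ℝ) < L := hL
  have h := apply_add_le_of_lipschitzWith_gradient hf hlip p (-(1 / (L : ℝ)) • gradient f p)
  rw [inner_smul_right, real_inner_self_eq_norm_sq, norm_smul, mul_pow, norm_neg,
    norm_div, norm_one, Real.norm_of_nonneg hL'.le] at h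
  have := hf0 (p + -(1 / (L : ℝ)) • gradient f p)
  have e : (L : ℝ) / 2 * ((1 / L) ^ 2 * ‖gradient f p‖ ^ 2) = 1 / L * ‖gradient f p‖ ^ 2 / 2 := by
    field_simp
  rw [e] at h
  have : 1 / (L : ℝ) * ‖gradient f p‖ ^ 2 ≤ 2 * f p := by linarith
  rw [div_mul_eq_mul_div, one_mul, div_le_iff₀ hL'] at this
  linarith

end Gradient

section Euclidean

variable {ι : Type*} [Fintype ι]

theorem EuclideanSpace.hasDerivAt_of_forall_hasDerivAt {x : ℝ → EuclideanSpace ℝ ι} {x' : ι → ℝ}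
    {t : ℝ} (h : ∀ i, HasDerivAt (fun s => x s i) (x' i) t) :
    HasDerivAt x (WithLp.toLp 2 x') t :=
  (PiLp.continuousLinearEquiv 2 ℝ (fun _ : ι => ℝ)).symm.hasFDerivAt.comp_hasDerivAt t
    (hasDerivAt_pi.2 h)

theorem EuclideanSpace.abs_apply_le_norm (w : EuclideanSpace ℝ ι) (i : ι) : |w i| ≤ ‖w‖ :=
  (norm_eq_abs _).symm.trans_le (PiLp.norm_apply_le w i)

theorem EuclideanSpace.norm_le_sqrt_card_mul {w : EuclideanSpace ℝ ι} {c : ℝ} (hc : 0 ≤ c)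
    (h : ∀ i, |w i| ≤ c) : ‖w‖ ≤ √(Fintype.card ι) * c := by
  rw [EuclideanSpace.norm_eq, ← sqrt_sq hc, ← sqrt_mul (Nat.cast_nonneg _)]
  refine sqrt_le_sqrt ?_
  calc ∑ i, ‖w i‖ ^ 2 ≤ ∑ _i : ι, c ^ 2 :=
        Finset.sum_le_sum fun i _ => by
          rw [norm_eq_abs]; exact pow_le_pow_left₀ (abs_nonneg _) (h i) 2
    _ = _ := by simp

end Euclidean

theorem HasDerivAt.sq_div_sqrt {m u : ℝ → ℝ} {m' u' t : ℝ} (hm : HasDerivAt m m' t)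
    (hu : HasDerivAt u u' t) (ht : 0 < u t) :
    HasDerivAt (fun s => m s ^ 2 / √(u s))
      (2 * m t * m' / √(u t) - m t ^ 2 * u' / (2 * u t * √(u t))) t := by
  have hP := sqrt_pos.2 ht
  refine ((hm.fun_pow 2).div (hu.sqrt ht.ne') hP.ne').congr_deriv ?_
  have hsq := sq_sqrt ht.le
  field_simp
  rw [hsq]
  ring

theorem abs_div_sqrt_le_of_mul_sq_lt {lam₁ lam₂ m u : ℝ} (h₁ : 0 < lam₁) (h₂ : 0 < lam₂)
    (h : lam₂ * m ^ 2 < lam₁ * u) : |m / √u| ≤ √(lam₁ / lam₂) := by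
  have hu : 0 < u := pos_of_mul_pos_right ((mul_nonneg h₂.le (sq_nonneg m)).trans_lt h) h₁.le
  rw [abs_div, abs_of_pos (sqrt_pos.2 hu), div_le_iff₀ (sqrt_pos.2 hu), ← sqrt_mul (by positivity)]
  refine abs_le_sqrt ?_
  rw [div_mul_eq_mul_div, le_div_iff₀ h₂]
  linarith

/-- Along the flow, `r = 1 / α` and `k = r' / r`; the Lyapunov derivative per coordinate is
`r m² (k - 2 lam₁ + lam₂ / 2) / (2 lam₁ √u) - r lam₂ m² g² / (4 lam₁ u √u)`. -/
theorem adamLyapunov_deriv_coord_nonpos {lam₁ lam₂ m g u r k : ℝ} (h₂ : 0 < lam₂)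
    (h₁₂ : lam₂ < lam₁) (hu : 0 < u) (hr : 0 < r) (hk : k ≤ 2 * lam₁ - lam₂ / 2) :
    g * (-r * (m / √u)) + (r * k * (m ^ 2 / √u) + r * (2 * m * (-lam₁ * m + lam₁ * g) / √u
      - m ^ 2 * (-lam₂ * u + lam₂ * g ^ 2) / (2 * u * √u))) / (2 * lam₁) ≤ 0 := by
  have h₁ : 0 < lam₁ := h₂.trans h₁₂
  obtain ⟨P, hP, rfl⟩ : ∃ P, 0 < P ∧ P ^ 2 = u := ⟨√u, sqrt_pos.2 hu, sq_sqrt hu.le⟩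
  rw [sqrt_sq hP.le]
  have key : g * (-r * (m / P)) + (r * k * (m ^ 2 / P) + r * (2 * m * (-lam₁ * m + lam₁ * g) / P
      - m ^ 2 * (-lam₂ * P ^ 2 + lam₂ * g ^ 2) / (2 * P ^ 2 * P))) / (2 * lam₁)
      = r * m ^ 2 * (k - (2 * lam₁ - lam₂ / 2)) / (2 * lam₁ * P)
        - r * lam₂ * m ^ 2 * g ^ 2 / (4 * lam₁ * P ^ 3) := by
    field_simp
    ring
  rw [key, sub_nonpos]
  calc r * m ^ 2 * (k - (2 * lam₁ - lam₂ / 2)) / (2 * lam₁ * P) ≤ 0 :=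
        div_nonpos_of_nonpos_of_nonneg
          (mul_nonpos_of_nonneg_of_nonpos (by positivity) (by linarith)) (by positivity)
    _ ≤ _ := by positivity

theorem abs_one_div_adamAlpha_mul_le {lam₁ lam₂ m u t : ℝ} (h₂ : 0 < lam₂) (h₁₂ : lam₂ < lam₁)
    (h₁ : lam₁ < 1) (ht : 1 ≤ t) (h : lam₂ * m ^ 2 < lam₁ * u) :
    |1 / adamAlpha lam₁ lam₂ t * (m / √u)| ≤ 1 / lam₁ * √(lam₁ / lam₂) := by
  have h₁0 : 0 < lam₁ := h₂.trans h₁₂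
  rw [abs_mul, abs_of_pos (one_div_adamAlpha_pos h₁0 h₁ h₂ (h₁₂.trans h₁) ht)]
  exact mul_le_mul (one_div_adamAlpha_le h₁0 h₁ (h₁₂.trans h₁) ht)
    (abs_div_sqrt_le_of_mul_sq_lt h₁0 h₂ h) (abs_nonneg _) (by positivity)

section AdamFlow

variable {ι : Type*} [Fintype ι] {lam₁ lam₂ : ℝ} {f : EuclideanSpace ℝ ι → ℝ}
  {μ v x : ℝ → EuclideanSpace ℝ ι}

structure IsAdamFlow (lam₁ lam₂ : ℝ) (f : EuclideanSpace ℝ ι → ℝ)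
    (μ v x : ℝ → EuclideanSpace ℝ ι) : Prop where
  hasDerivAt_μ : ∀ t ≥ (1 : ℝ), ∀ i, HasDerivAt (fun s => μ s i)
    (-lam₁ * μ t i + lam₁ * gradient f (x t) i) t
  hasDerivAt_v : ∀ t ≥ (1 : ℝ), ∀ i, HasDerivAt (fun s => v s i)
    (-lam₂ * v t i + lam₂ * gradient f (x t) i ^ 2) t
  hasDerivAt_x : ∀ t ≥ (1 : ℝ), ∀ i, HasDerivAt (fun s => x s i)
    (-(1 / adamAlpha lam₁ lam₂ t) * (μ t i / √(v t i))) t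

noncomputable def adamLyapunov (lam₁ lam₂ : ℝ) (f : EuclideanSpace ℝ ι → ℝ)
    (μ v x : ℝ → EuclideanSpace ℝ ι) (t : ℝ) : ℝ :=
  f (x t) + ∑ i, 1 / adamAlpha lam₁ lam₂ t * (μ t i ^ 2 / √(v t i)) / (2 * lam₁)

namespace IsAdamFlow

theorem mul_sq_lt (hflow : IsAdamFlow lam₁ lam₂ f μ v x) (h₂ : 0 < lam₂) (h₁₂ : lam₂ ≤ lam₁)
    (hμ1 : μ 1 = 0) (hv1 : ∀ i, 0 < v 1 i) :
    ∀ t ≥ (1 : ℝ), ∀ i, lam₂ * μ t i ^ 2 < lam₁ * v t i := fun t ht i =>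
  mul_sq_lt_of_hasDerivAt_movingAverage h₂ h₁₂ (fun s hs => hflow.hasDerivAt_μ s hs i)
    (fun s hs => hflow.hasDerivAt_v s hs i)
    (by simpa [hμ1] using mul_pos (h₂.trans_le h₁₂) (hv1 i)) t ht

theorem adamLyapunov_antitoneOn (hflow : IsAdamFlow lam₁ lam₂ f μ v x) (h₂ : 0 < lam₂)
    (h₁₂ : lam₂ < lam₁) (h₁ : lam₁ < 1) (hf : Differentiable ℝ f)
    (hv : ∀ t ≥ (1 : ℝ), ∀ i, 0 < v t i) :
    AntitoneOn (adamLyapunov lam₁ lam₂ f μ v x) (Ici 1) := by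
  have h₁0 : 0 < lam₁ := h₂.trans h₁₂
  refine antitoneOn_Ici_of_hasDerivAt_nonpos (w' := fun t => ∑ i,
      (gradient f (x t) i * (-(1 / adamAlpha lam₁ lam₂ t) * (μ t i / √(v t i)))
      + (1 / adamAlpha lam₁ lam₂ t * (biasLogDeriv lam₂ t / 2 - biasLogDeriv lam₁ t)
          * (μ t i ^ 2 / √(v t i))
        + 1 / adamAlpha lam₁ lam₂ t
          * (2 * μ t i * (-lam₁ * μ t i + lam₁ * gradient f (x t) i) / √(v t i)
            - μ t i ^ 2 * (-lam₂ * v t i + lam₂ * gradient f (x t) i ^ 2)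
              / (2 * v t i * √(v t i)))) / (2 * lam₁)))
    (fun t ht => ?_) (fun t ht => Finset.sum_nonpos fun i _ =>
      adamLyapunov_deriv_coord_nonpos h₂ h₁₂ (hv t ht i)
        (one_div_adamAlpha_pos h₁0 h₁ h₂ (h₁₂.trans h₁) ht) (biasLogDeriv_sub_le h₂ h₁₂.le h₁ ht))
  have hfx : HasDerivAt (fun s => f (x s))
      (∑ i, gradient f (x t) i * (-(1 / adamAlpha lam₁ lam₂ t) * (μ t i / √(v t i)))) t := by
    refine ((hf (x t)).hasDerivAt_comp
      (EuclideanSpace.hasDerivAt_of_forall_hasDerivAt (hflow.hasDerivAt_x t ht))).congr_deriv ?_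
    rw [PiLp.inner_apply]
    simp only [RCLike.inner_apply, conj_trivial]
    exact Finset.sum_congr rfl fun i _ => mul_comm _ _
  have hterm := fun i => ((hasDerivAt_one_div_adamAlpha h₁0 h₁ h₂ (h₁₂.trans h₁) ht).mul
    ((hflow.hasDerivAt_μ t ht i).sq_div_sqrt (hflow.hasDerivAt_v t ht i) (hv t ht i))).div_const
      (2 * lam₁)
  exact (hfx.add (HasDerivAt.fun_sum fun i _ => hterm i)).congr_deriv Finset.sum_add_distrib.symm

theorem apply_le (hflow : IsAdamFlow lam₁ lam₂ f μ v x) (h₂ : 0 < lam₂) (h₁₂ : lam₂ < lam₁)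
    (h₁ : lam₁ < 1) (hf : Differentiable ℝ f) (hv : ∀ t ≥ (1 : ℝ), ∀ i, 0 < v t i)
    (hμ1 : μ 1 = 0) : ∀ t ≥ (1 : ℝ), f (x t) ≤ f (x 1) := by
  intro t ht
  have h₁0 : 0 < lam₁ := h₂.trans h₁₂
  have hE := hflow.adamLyapunov_antitoneOn h₂ h₁₂ h₁ hf hv (mem_Ici.2 le_rfl) (mem_Ici.2 ht) ht
  have hr := one_div_adamAlpha_pos h₁0 h₁ h₂ (h₁₂.trans h₁) ht
  have hsum : 0 ≤ ∑ i, 1 / adamAlpha lam₁ lam₂ t * (μ t i ^ 2 / √(v t i)) / (2 * lam₁) :=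
    Finset.sum_nonneg fun i _ => by positivity
  simp only [adamLyapunov, hμ1, PiLp.zero_apply, ne_eq, OfNat.ofNat_ne_zero, not_false_eq_true,
    zero_pow, zero_div, mul_zero, Finset.sum_const_zero, add_zero] at hE
  linarith

theorem abs_μ_le (hflow : IsAdamFlow lam₁ lam₂ f μ v x) (h₁ : 0 ≤ lam₁) {G : ℝ}
    (hg : ∀ t ≥ (1 : ℝ), ‖gradient f (x t)‖ ≤ G) (hμ1 : μ 1 = 0) :
    ∀ t ≥ (1 : ℝ), ∀ i, |μ t i| ≤ G := fun t ht i =>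
  abs_le_of_hasDerivAt_movingAverage h₁ (fun s hs => hflow.hasDerivAt_μ s hs i)
    (fun s hs => (EuclideanSpace.abs_apply_le_norm _ i).trans (hg s hs))
    (by simpa [hμ1] using (norm_nonneg _).trans (hg 1 le_rfl)) t ht

theorem abs_v_le (hflow : IsAdamFlow lam₁ lam₂ f μ v x) (h₂ : 0 ≤ lam₂) {G : ℝ}
    (hg : ∀ t ≥ (1 : ℝ), ‖gradient f (x t)‖ ≤ G) :
    ∀ t ≥ (1 : ℝ), ∀ i, |v t i| ≤ max (G ^ 2) ‖v 1‖ := fun t ht i =>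
  abs_le_of_hasDerivAt_movingAverage h₂ (fun s hs => hflow.hasDerivAt_v s hs i)
    (fun s hs => by
      rw [abs_pow]
      exact le_max_of_le_left (pow_le_pow_left₀ (abs_nonneg _)
        ((EuclideanSpace.abs_apply_le_norm _ i).trans (hg s hs)) 2))
    (le_max_of_le_right (EuclideanSpace.abs_apply_le_norm _ i)) t ht

end IsAdamFlow

end AdamFlow

/-- Trajectory boundedness for continuous-time Adam: along any solution, the
gradient `‖∇f(x(t))‖`, the moment estimates `μ(t)`, `v(t)`, and the velocity
`ẋ(t)` (whose coordinates are `-(1/α(t)) μᵢ(t)/√(vᵢ(t))`) are all bounded on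
`[1,∞)`. -/
theorem adam_trajectory_bounded
    (d : ℕ) (lam₁ lam₂ : ℝ)
    (hlam₂ : 0 < lam₂) (hlam₁₂ : lam₂ < lam₁) (hlam₁ : lam₁ < 1)
    (f : EuclideanSpace ℝ (Fin d) → ℝ) (L : NNReal)
    (hf : ContDiff ℝ 1 f) (hf0 : ∀ y, 0 ≤ f y)
    (hlip : LipschitzWith L (gradient f))
    (α : ℝ → ℝ)
    (hα : ∀ t : ℝ, α t = (1 - (1 - lam₁) ^ t) / Real.sqrt (1 - (1 - lam₂) ^ t))
    (μ v x : ℝ → EuclideanSpace ℝ (Fin d))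
    (hμ : ∀ t ≥ (1 : ℝ), ∀ i : Fin d, HasDerivAt (fun s => μ s i)
      (-lam₁ * μ t i + lam₁ * gradient f (x t) i) t)
    (hv : ∀ t ≥ (1 : ℝ), ∀ i : Fin d, HasDerivAt (fun s => v s i)
      (-lam₂ * v t i + lam₂ * (gradient f (x t) i) ^ 2) t)
    (hx : ∀ t ≥ (1 : ℝ), ∀ i : Fin d, HasDerivAt (fun s => x s i)
      (-(1 / α t) * (μ t i / Real.sqrt (v t i))) t)
    (hμ1 : μ 1 = 0) (hv1 : ∀ i : Fin d, 0 < v 1 i) :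
    ∃ M : ℝ, ∀ t ≥ (1 : ℝ),
      ‖gradient f (x t)‖ ≤ M ∧ ‖μ t‖ ≤ M ∧ ‖v t‖ ≤ M ∧
        ∀ i : Fin d, |(1 / α t) * (μ t i / Real.sqrt (v t i))| ≤ M := by
  obtain rfl : α = adamAlpha lam₁ lam₂ := funext hα
  have hflow : IsAdamFlow lam₁ lam₂ f μ v x := ⟨hμ, hv, hx⟩
  have hlam₁0 : 0 < lam₁ := hlam₂.trans hlam₁₂
  have hratio := hflow.mul_sq_lt hlam₂ hlam₁₂.le hμ1 hv1
  have hvpos : ∀ t ≥ (1 : ℝ), ∀ i, 0 < v t i := fun t ht i =>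
    pos_of_mul_pos_right ((mul_nonneg hlam₂.le (sq_nonneg _)).trans_lt (hratio t ht i)) hlam₁0.le
  have hdiff : Differentiable ℝ f := hf.differentiable one_ne_zero
  set G := √(2 * ((L + 1 : NNReal) : ℝ) * f (x 1))
  have hgrad : ∀ t ≥ (1 : ℝ), ‖gradient f (x t)‖ ≤ G := fun t ht => by
    refine le_sqrt_of_sq_le ((sq_norm_gradient_le_of_lipschitzWith hdiff hf0 (by positivity)
      (hlip.weaken (le_add_of_nonneg_right zero_le_one)) (x t)).trans ?_)
    gcongr
    exact hflow.apply_le hlam₂ hlam₁₂ hlam₁ hdiff hvpos hμ1 t ht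
  have hμb := hflow.abs_μ_le hlam₁0.le hgrad hμ1
  have hvb := hflow.abs_v_le hlam₂.le hgrad
  have hG : 0 ≤ G := sqrt_nonneg _
  refine ⟨max (max G (√d * G)) (max (√d * max (G ^ 2) ‖v 1‖) (1 / lam₁ * √(lam₁ / lam₂))),
    fun t ht => ⟨?_, ?_, ?_, fun i => ?_⟩⟩
  · exact (hgrad t ht).trans (le_max_of_le_left (le_max_left _ _))
  · refine le_max_of_le_left (le_max_of_le_right ?_)
    simpa using EuclideanSpace.norm_le_sqrt_card_mul hG (hμb t ht)
  · refine le_max_of_le_right (le_max_of_le_left ?_)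
    simpa using EuclideanSpace.norm_le_sqrt_card_mul ((sq_nonneg G).trans (le_max_left _ _))
      (hvb t ht)
  · exact (abs_one_div_adamAlpha_mul_le hlam₂ hlam₁₂ hlam₁ ht (hratio t ht i)).trans
      (le_max_of_le_right (le_max_right _ _))
end
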